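/- ∑_{n≥1} 1 / (n · 2^n · binom(3n, n)) = π/10 − (log 2)/5. -/

import Mathlib

/-!
By the Beta integral, the `n`-th term is `∫₀¹ (1 - x)² / 2 · (x (1 - x)² / 2)ⁿ dx`. On `[0, 1]` the
ratio `x (1 - x)² / 2` is at most `1 / 2`, so the geometric series may be summed under the integral,
giving `∫₀¹ (1 - x)² / ((2 - x)(x² + 1)) dx` since `2 - x (1 - x)² = (2 - x)(x² + 1)`. Partial
fractions give the antiderivative `-log (2 - x) / 5 - 2 log (x² + 1) / 5 + 2 arctan x / 5`.
-/

open Real intervalIntegral Set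
open scoped Nat

theorem integral_pow_mul_one_sub_pow (a b : ℕ) :
    ∫ x in (0 : ℝ)..1, x ^ a * (1 - x) ^ b = (a ! * b ! : ℝ) / (a + b + 1)! := by
  induction b generalizing a with
  | zero =>
    simp only [pow_zero, mul_one, integral_pow, one_pow, zero_pow (Nat.succ_ne_zero a), sub_zero,
      add_zero, Nat.factorial_zero, Nat.factorial_succ]
    push_cast
    field_simp
  | succ b ih =>
    have split (x : ℝ) :
        x ^ a * (1 - x) ^ (b + 1) = x ^ a * (1 - x) ^ b - x ^ (a + 1) * (1 - x) ^ b := by ring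
    simp_rw [split]
    rw [integral_sub (Continuous.intervalIntegrable (by fun_prop) _ _)
      (Continuous.intervalIntegrable (by fun_prop) _ _), ih, ih,
      show a + 1 + b + 1 = a + (b + 1) + 1 by ring, Nat.factorial_succ (a + (b + 1)),
      show a + (b + 1) = a + b + 1 by ring, Nat.factorial_succ a, Nat.factorial_succ b]
    push_cast
    field_simp
    ring

theorem one_div_mul_choose_eq_integral (n : ℕ) :
    (1 : ℝ) / ((n + 1) * 2 ^ (n + 1) * (Nat.choose (3 * (n + 1)) (n + 1))) =
      ∫ x in (0 : ℝ)..1, (1 - x) ^ 2 / 2 * (x * (1 - x) ^ 2 / 2) ^ n := by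
  have integrand (x : ℝ) : (1 - x) ^ 2 / 2 * (x * (1 - x) ^ 2 / 2) ^ n =
      (2 ^ (n + 1) : ℝ)⁻¹ * (x ^ n * (1 - x) ^ (2 * n + 2)) := by
    rw [div_pow, mul_pow, ← pow_mul]
    field_simp
    ring
  simp_rw [integrand]
  rw [integral_const_mul, integral_pow_mul_one_sub_pow, Nat.cast_choose ℝ (by omega),
    show 3 * (n + 1) - (n + 1) = 2 * n + 2 by omega, show n + (2 * n + 2) + 1 = 3 * (n + 1) by ring,
    Nat.factorial_succ n]
  push_cast
  field_simp

theorem mem_Icc_mul_one_sub_sq_div_two {x : ℝ} (hx : x ∈ Icc (0 : ℝ) 1) :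
    x * (1 - x) ^ 2 / 2 ∈ Icc (0 : ℝ) (1 / 2) := by
  obtain ⟨h0, h1⟩ := hx
  constructor
  · have : 0 ≤ 1 - x := by linarith
    positivity
  · nlinarith [mul_nonneg h0 (sub_nonneg.2 h1)]

theorem hasSum_one_sub_sq_div_two_mul_pow {x : ℝ} (hx : x ∈ Icc (0 : ℝ) 1) :
    HasSum (fun n : ℕ => (1 - x) ^ 2 / 2 * (x * (1 - x) ^ 2 / 2) ^ n)
      ((1 - x) ^ 2 / ((2 - x) * (x ^ 2 + 1))) := by
  obtain ⟨hr0, hr1⟩ := mem_Icc_mul_one_sub_sq_div_two hx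
  have hden : (2 - x) * (x ^ 2 + 1) ≠ 0 := by
    have : 0 < 2 - x := by linarith [hx.2]
    positivity
  have hsum : (1 - x) ^ 2 / ((2 - x) * (x ^ 2 + 1)) =
      (1 - x) ^ 2 / 2 * (1 - x * (1 - x) ^ 2 / 2)⁻¹ := by
    rw [show 1 - x * (1 - x) ^ 2 / 2 = (2 - x) * (x ^ 2 + 1) / 2 by ring]
    field_simp
  rw [hsum]
  exact (hasSum_geometric_of_lt_one hr0 (by linarith)).mul_left _

theorem norm_one_sub_sq_div_two_mul_pow_le {x : ℝ} (hx : x ∈ Icc (0 : ℝ) 1) (n : ℕ) :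
    ‖(1 - x) ^ 2 / 2 * (x * (1 - x) ^ 2 / 2) ^ n‖ ≤ (1 / 2) ^ n := by
  obtain ⟨hr0, hr1⟩ := mem_Icc_mul_one_sub_sq_div_two hx
  have hc : (1 - x) ^ 2 / 2 ≤ 1 := by nlinarith [hx.1, hx.2]
  rw [norm_of_nonneg (by positivity)]
  calc (1 - x) ^ 2 / 2 * (x * (1 - x) ^ 2 / 2) ^ n ≤ 1 * (1 / 2) ^ n := by gcongr
    _ = (1 / 2) ^ n := one_mul _

theorem integral_one_sub_sq_div_two_sub_mul_sq_add_one :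
    ∫ x in (0 : ℝ)..1, (1 - x) ^ 2 / ((2 - x) * (x ^ 2 + 1)) = π / 10 - log 2 / 5 := by
  have hderiv : ∀ x ∈ uIcc (0 : ℝ) 1,
      HasDerivAt (fun x => -(1 / 5) * log (2 - x) - 2 / 5 * log (x ^ 2 + 1) + 2 / 5 * arctan x)
        ((1 - x) ^ 2 / ((2 - x) * (x ^ 2 + 1))) x := by
    intro x hx
    rw [uIcc_of_le zero_le_one] at hx
    have h2x : 2 - x ≠ 0 := by linarith [hx.2]
    have hx2 : x ^ 2 + 1 ≠ 0 := by positivity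
    have h := ((((hasDerivAt_id' x).const_sub 2).log h2x).const_mul (-(1 / 5))).sub
      ((((hasDerivAt_pow 2 x).add_const 1).log hx2).const_mul (2 / 5)) |>.add
      ((hasDerivAt_arctan x).const_mul (2 / 5))
    refine h.congr_deriv ?_
    field_simp
    ring
  have hcont : ContinuousOn (fun x : ℝ => (1 - x) ^ 2 / ((2 - x) * (x ^ 2 + 1))) (uIcc 0 1) := by
    refine ContinuousOn.div (by fun_prop) (by fun_prop) fun x hx => ?_
    rw [uIcc_of_le zero_le_one] at hx
    have : 0 < 2 - x := by linarith [hx.2]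
    positivity
  rw [integral_eq_sub_of_hasDerivAt hderiv hcont.intervalIntegrable]
  norm_num
  ring

theorem stmt_17 :
    ∑' n : ℕ,
        (1 : ℝ) / ((n + 1) * 2 ^ (n + 1) * (Nat.choose (3 * (n + 1)) (n + 1))) =
      Real.pi / 10 - Real.log 2 / 5 := by
  have hIcc : ∀ x ∈ uIoc (0 : ℝ) 1, x ∈ Icc (0 : ℝ) 1 := fun x hx =>
    uIcc_of_le (zero_le_one (α := ℝ)) ▸ uIoc_subset_uIcc hx
  have hsum :
      HasSum (fun n : ℕ => ∫ x in (0 : ℝ)..1, (1 - x) ^ 2 / 2 * (x * (1 - x) ^ 2 / 2) ^ n)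
        (∫ x in (0 : ℝ)..1, (1 - x) ^ 2 / ((2 - x) * (x ^ 2 + 1))) :=
    hasSum_integral_of_dominated_convergence (fun n _ => (1 / 2 : ℝ) ^ n)
      (fun n => (by fun_prop : Continuous _).aestronglyMeasurable)
      (fun n => .of_forall fun x hx => norm_one_sub_sq_div_two_mul_pow_le (hIcc x hx) n)
      (.of_forall fun _ _ => summable_geometric_two)
      intervalIntegrable_const
      (.of_forall fun x hx => hasSum_one_sub_sq_div_two_mul_pow (hIcc x hx))
  simp_rw [one_div_mul_choose_eq_integral, hsum.tsum_eq,
    integral_one_sub_sq_div_two_sub_mul_sq_add_one]
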